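/- Integral identities for the explicit ground state: let λ > 0, y ∈ ℝ³ and Φ ∈ ℂ² with ‖Φ‖² = 3λ/8, and set u = √(3/2)·U_{λ,y} and ψ(x) = U_{λ,y}(x)³·(Φ − c((x − y)/λ)Φ). Then ∫_{ℝ³} ‖∇u(x)‖² dx = 9π²/4 and ∫_{ℝ³} u(x)²·‖ψ(x)‖² dx = 9π²/4; in particular ∫_{ℝ³} ‖∇u‖² dx = ∫_{ℝ³} u²‖ψ‖² dx, the Nehari-type identity satisfied by solutions of the Euclidean Dirac–Einstein system. -/

import Mathlib

open MeasureTheory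

noncomputable section

/-- Points of Euclidean `ℝ³`. -/
abbrev R3 := EuclideanSpace ℝ (Fin 3)

/-- Spinors: `ℂ²` with its standard Hermitian inner product and norm. -/
abbrev Spinor := EuclideanSpace ℂ (Fin 2)

/-- The standard bubble `U_{λ,y}(x) = (2λ/(λ² + ‖x − y‖²))^(1/2)`. -/
def bubble (l : ℝ) (y : R3) (x : R3) : ℝ :=
  Real.sqrt (2 * l / (l ^ 2 + ‖x - y‖ ^ 2))

/-- Pauli matrix `σ₁`. -/
def pauli1 : Matrix (Fin 2) (Fin 2) ℂ := !![0, 1; 1, 0]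

/-- Pauli matrix `σ₂`. -/
def pauli2 : Matrix (Fin 2) (Fin 2) ℂ := !![0, -Complex.I; Complex.I, 0]

/-- Pauli matrix `σ₃`. -/
def pauli3 : Matrix (Fin 2) (Fin 2) ℂ := !![1, 0; 0, -1]

/-- Clifford multiplication by `v ∈ ℝ³`: the matrix `c(v) = −i(v₁σ₁ + v₂σ₂ + v₃σ₃)`. -/
def cliffordMatrix (v : R3) : Matrix (Fin 2) (Fin 2) ℂ :=
  (-Complex.I) • ((v 0 : ℂ) • pauli1 + (v 1 : ℂ) • pauli2 + (v 2 : ℂ) • pauli3)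

/-- The action of `c(v)` on a spinor. -/
def cliffordMul (v : R3) (φ : Spinor) : Spinor :=
  (WithLp.equiv 2 (Fin 2 → ℂ)).symm ((cliffordMatrix v).mulVec (WithLp.equiv 2 (Fin 2 → ℂ) φ))

/-- The ground-state scalar `u = √(3/2)·U_{λ,y}`. -/
def groundScalar (l : ℝ) (y : R3) (x : R3) : ℝ :=
  Real.sqrt (3 / 2) * bubble l y x

/-- The ground-state spinor `ψ(x) = U_{λ,y}(x)³·(Φ − c((x − y)/λ)Φ)`. -/
def groundSpinor (l : ℝ) (y : R3) (Φ : Spinor) (x : R3) : Spinor :=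
  (bubble l y x ^ 3 : ℝ) • (Φ - cliffordMul (l⁻¹ • (x - y)) Φ)

/-!
With `s = ‖x − y‖²`, both integrands are radial: `‖∇u‖² = 3λs/(λ² + s)³`, and, because `c(v)` is
skew-Hermitian with `‖c(v)Φ‖ = ‖v‖‖Φ‖`, `‖Φ − c(v)Φ‖² = (1 + ‖v‖²)‖Φ‖²`, whence
`u²‖ψ‖² = 9λ³/(λ² + s)³`. Polar coordinates turn `∫ f(‖x − y‖) dx` into `4π ∫₀^∞ r² f(r) dr`, and
both radial integrals have primitives `a·arctan(r/λ) + b·r/(λ² + r²) + c·r/(λ² + r²)²`, which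
vanish at `0` and tend to `aπ/2` at infinity; here `a = 9/8` in both cases.
-/

open Filter Real Set Topology

theorem cliffordMul_apply_zero (v : R3) (Φ : Spinor) :
    cliffordMul v Φ 0 = -Complex.I * (v 2 * Φ 0 + (v 0 - Complex.I * v 1) * Φ 1) := by
  simp [cliffordMul, cliffordMatrix, pauli1, pauli2, pauli3, dotProduct]
  ring

theorem cliffordMul_apply_one (v : R3) (Φ : Spinor) :
    cliffordMul v Φ 1 = -Complex.I * ((v 0 + Complex.I * v 1) * Φ 0 - v 2 * Φ 1) := by
  simp [cliffordMul, cliffordMatrix, pauli1, pauli2, pauli3, dotProduct]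
  ring

theorem Spinor.norm_sq_eq (φ : Spinor) :
    ‖φ‖ ^ 2 = Complex.normSq (φ 0) + Complex.normSq (φ 1) := by
  simp [EuclideanSpace.norm_sq_eq, Fin.sum_univ_two, Complex.normSq_eq_norm_sq]

theorem R3.norm_sq_eq (v : R3) : ‖v‖ ^ 2 = v 0 ^ 2 + v 1 ^ 2 + v 2 ^ 2 := by
  simp [EuclideanSpace.norm_sq_eq, Fin.sum_univ_three]

theorem norm_cliffordMul_sq (v : R3) (Φ : Spinor) :
    ‖cliffordMul v Φ‖ ^ 2 = ‖v‖ ^ 2 * ‖Φ‖ ^ 2 := by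
  simp only [Spinor.norm_sq_eq, R3.norm_sq_eq, cliffordMul_apply_zero, cliffordMul_apply_one,
    Complex.normSq_apply, Complex.add_re, Complex.add_im, Complex.sub_re, Complex.sub_im,
    Complex.mul_re, Complex.mul_im, Complex.neg_re, Complex.neg_im, Complex.I_re, Complex.I_im,
    Complex.ofReal_re, Complex.ofReal_im]
  ring

theorem re_inner_cliffordMul_self (v : R3) (Φ : Spinor) :
    RCLike.re (inner ℂ Φ (cliffordMul v Φ)) = 0 := by
  simp only [EuclideanSpace.inner_eq_star_dotProduct, dotProduct, Fin.sum_univ_two,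
    cliffordMul_apply_zero, cliffordMul_apply_one, Pi.star_apply, RCLike.star_def,
    RCLike.re_to_complex, Complex.add_re, Complex.add_im, Complex.sub_re, Complex.sub_im,
    Complex.mul_re, Complex.mul_im, Complex.neg_re, Complex.neg_im, Complex.I_re, Complex.I_im,
    Complex.ofReal_re, Complex.ofReal_im, Complex.conj_re, Complex.conj_im]
  ring

theorem norm_sub_cliffordMul_sq (v : R3) (Φ : Spinor) :
    ‖Φ - cliffordMul v Φ‖ ^ 2 = (1 + ‖v‖ ^ 2) * ‖Φ‖ ^ 2 := by
  rw [@norm_sub_sq ℂ, re_inner_cliffordMul_self, norm_cliffordMul_sq]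
  ring

theorem HasDerivAt.hasGradientAt_comp_norm_sub_sq {E : Type*} [NormedAddCommGroup E]
    [InnerProductSpace ℝ E] [CompleteSpace E] {g : ℝ → ℝ} {g' : ℝ} {x y : E}
    (hg : HasDerivAt g g' (‖x - y‖ ^ 2)) :
    HasGradientAt (fun z => g (‖z - y‖ ^ 2)) ((2 * g') • (x - y)) x := by
  rw [hasGradientAt_iff_hasFDerivAt]
  refine (hg.comp_hasFDerivAt x ((hasFDerivAt_id x).sub_const y).norm_sq).congr_fderiv ?_
  ext w
  simp only [id_eq, map_sub, ContinuousLinearMap.comp_id, smul_apply, sub_apply,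
    coe_innerSL_apply, nsmul_eq_mul, Nat.cast_ofNat, smul_eq_mul, map_smul,
    InnerProductSpace.toDual_apply_apply]
  ring

theorem groundScalar_eq (l : ℝ) (y x : R3) :
    groundScalar l y x = √(3 * l / (l ^ 2 + ‖x - y‖ ^ 2)) := by
  rw [groundScalar, bubble, ← Real.sqrt_mul (by norm_num)]
  ring_nf

theorem norm_gradient_groundScalar_sq {l : ℝ} (hl : 0 < l) (y x : R3) :
    ‖gradient (groundScalar l y) x‖ ^ 2
      = 3 * l * ‖x - y‖ ^ 2 / (l ^ 2 + ‖x - y‖ ^ 2) ^ 3 := by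
  set s := ‖x - y‖ ^ 2
  have hq : 0 < l ^ 2 + s := by positivity
  have hv : 0 < 3 * l / (l ^ 2 + s) := by positivity
  have hg : HasDerivAt (fun t => √(3 * l / (l ^ 2 + t)))
      ((0 * (l ^ 2 + s) - 3 * l * 1) / (l ^ 2 + s) ^ 2 / (2 * √(3 * l / (l ^ 2 + s)))) s :=
    ((hasDerivAt_const s (3 * l)).div ((hasDerivAt_id s).const_add (l ^ 2)) hq.ne').sqrt hv.ne'
  rw [funext (groundScalar_eq l y), hg.hasGradientAt_comp_norm_sub_sq.gradient, norm_smul,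
    mul_pow, Real.norm_eq_abs, sq_abs]
  simp only [div_pow, mul_pow, Real.sq_sqrt hv.le]
  field_simp
  ring

theorem bubble_sq {l : ℝ} (hl : 0 ≤ l) (y x : R3) :
    bubble l y x ^ 2 = 2 * l / (l ^ 2 + ‖x - y‖ ^ 2) :=
  Real.sq_sqrt (by positivity)

theorem groundScalar_sq_mul_norm_groundSpinor_sq {l : ℝ} (hl : 0 < l) (y : R3) {Φ : Spinor}
    (hΦ : ‖Φ‖ ^ 2 = 3 * l / 8) (x : R3) :
    groundScalar l y x ^ 2 * ‖groundSpinor l y Φ x‖ ^ 2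
      = 9 * l ^ 3 / (l ^ 2 + ‖x - y‖ ^ 2) ^ 3 := by
  rw [groundScalar, groundSpinor, norm_smul, mul_pow, mul_pow, norm_sub_cliffordMul_sq,
    norm_smul, mul_pow, hΦ, Real.norm_eq_abs, Real.norm_eq_abs, sq_abs, sq_abs,
    Real.sq_sqrt (by norm_num), ← pow_mul, show 3 * 2 = 2 * 3 from rfl, pow_mul, bubble_sq hl.le]
  field_simp
  ring

theorem integral_comp_norm_sub_eq (y : R3) (f : ℝ → ℝ) :
    ∫ x : R3, f ‖x - y‖ = 4 * π * ∫ r in Ioi 0, r ^ 2 * f r := by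
  rw [integral_sub_right_eq_self (fun x => f ‖x‖) y, integral_fun_norm_addHaar,
    finrank_euclideanSpace_fin, measureReal_def, EuclideanSpace.volume_ball_fin_three]
  have hball : 0 ≤ π * 4 / 3 := by positivity
  simp only [ENNReal.ofReal_one, one_pow, one_mul, ENNReal.toReal_ofReal hball, Nat.add_one_sub_one, smul_eq_mul, nsmul_eq_mul, Nat.cast_ofNat]
  ring

theorem tendsto_div_sq_add_sq_pow_atTop (l : ℝ) {n : ℕ} (hn : n ≠ 0) :
    Tendsto (fun r : ℝ => r / (l ^ 2 + r ^ 2) ^ n) atTop (𝓝 0) := by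
  refine squeeze_zero' ?_ ?_ tendsto_inv_atTop_zero
  · filter_upwards [eventually_ge_atTop 0] with r hr
    positivity
  · filter_upwards [eventually_ge_atTop 1] with r hr
    calc r / (l ^ 2 + r ^ 2) ^ n ≤ r / r ^ 2 := by
          gcongr
          calc r ^ 2 ≤ (r ^ 2) ^ n := le_self_pow₀ (one_le_pow₀ hr) hn
            _ ≤ (l ^ 2 + r ^ 2) ^ n := by gcongr; nlinarith [sq_nonneg l]
      _ = r⁻¹ := by field_simp

theorem hasDerivAt_arctan_primitive {l : ℝ} (hl : l ≠ 0) (a b c r : ℝ) :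
    HasDerivAt (fun r => a * arctan (r / l) + b * (r / (l ^ 2 + r ^ 2))
        + c * (r / (l ^ 2 + r ^ 2) ^ 2))
      ((a * l * (l ^ 2 + r ^ 2) ^ 2 + b * (l ^ 2 - r ^ 2) * (l ^ 2 + r ^ 2)
        + c * (l ^ 2 - 3 * r ^ 2)) / (l ^ 2 + r ^ 2) ^ 3) r := by
  have hq : l ^ 2 + r ^ 2 ≠ 0 := by positivity
  have hq' : HasDerivAt (fun r => l ^ 2 + r ^ 2) (2 * r) r := by
    simpa using ((hasDerivAt_id r).pow 2).const_add (l ^ 2)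
  have h := ((((hasDerivAt_id r).div_const l).arctan.const_mul a).add
    (((hasDerivAt_id r).div hq' hq).const_mul b)).add
    (((hasDerivAt_id r).div (hq'.pow 2) (pow_ne_zero 2 hq)).const_mul c)
  refine h.congr_deriv ?_
  simp only [id, Pi.pow_apply]
  field_simp
  ring

theorem integral_Ioi_eq_of_arctan_primitive {l : ℝ} (hl : 0 < l) {f : ℝ → ℝ} (a b c : ℝ)
    (hf : ∀ r, (a * l * (l ^ 2 + r ^ 2) ^ 2 + b * (l ^ 2 - r ^ 2) * (l ^ 2 + r ^ 2)
        + c * (l ^ 2 - 3 * r ^ 2)) / (l ^ 2 + r ^ 2) ^ 3 = f r)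
    (hf_nonneg : ∀ r, 0 < r → 0 ≤ f r) :
    ∫ r in Ioi 0, f r = a * π / 2 := by
  have hlim : Tendsto (fun r => a * arctan (r / l) + b * (r / (l ^ 2 + r ^ 2))
      + c * (r / (l ^ 2 + r ^ 2) ^ 2)) atTop (𝓝 (a * (π / 2))) := by
    simpa using (((tendsto_nhds_of_tendsto_nhdsWithin (tendsto_arctan_atTop.comp
      (tendsto_id.atTop_div_const hl))).const_mul a).add
      ((tendsto_div_sq_add_sq_pow_atTop l one_ne_zero).const_mul b)).add
      ((tendsto_div_sq_add_sq_pow_atTop l two_ne_zero).const_mul c)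
  have hderiv r (_ : r ∈ Ici 0) := hf r ▸ hasDerivAt_arctan_primitive hl.ne' a b c r
  rw [integral_Ioi_of_hasDerivAt_of_nonneg' hderiv hf_nonneg hlim]
  simp only [arctan_zero, mul_zero, zero_div, add_zero, sub_zero]
  ring

/-- Integral identities for the explicit ground state: with `‖Φ‖² = 3λ/8`,
`u = √(3/2)·U_{λ,y}` and `ψ(x) = U_{λ,y}(x)³·(Φ − c((x − y)/λ)Φ)`, one has
`∫ ‖∇u‖² = 9π²/4` and `∫ u²‖ψ‖² = 9π²/4`; in particular `∫ ‖∇u‖² = ∫ u²‖ψ‖²`. -/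
theorem groundstate_integral_identities (l : ℝ) (hl : 0 < l) (y : R3) (Φ : Spinor)
    (hΦ : ‖Φ‖ ^ 2 = 3 * l / 8) :
    (∫ x : R3, ‖gradient (groundScalar l y) x‖ ^ 2) = 9 * Real.pi ^ 2 / 4 ∧
      (∫ x : R3, groundScalar l y x ^ 2 * ‖groundSpinor l y Φ x‖ ^ 2)
        = 9 * Real.pi ^ 2 / 4 := by
  simp_rw [norm_gradient_groundScalar_sq hl y, groundScalar_sq_mul_norm_groundSpinor_sq hl y hΦ]
  have hgrad : ∫ r in Ioi 0, r ^ 2 * (3 * l * r ^ 2 / (l ^ 2 + r ^ 2) ^ 3) = 9 / 8 * π / 2 :=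
    integral_Ioi_eq_of_arctan_primitive hl _ (-(15 * l / 8)) (3 * l ^ 3 / 4)
      (fun r => by field_simp; ring) (fun r _ => by positivity)
  have hspin : ∫ r in Ioi 0, r ^ 2 * (9 * l ^ 3 / (l ^ 2 + r ^ 2) ^ 3) = 9 / 8 * π / 2 :=
    integral_Ioi_eq_of_arctan_primitive hl _ (9 * l / 8) (-(9 * l ^ 3 / 4))
      (fun r => by field_simp; ring) (fun r _ => by positivity)
  rw [integral_comp_norm_sub_eq y (fun r => 3 * l * r ^ 2 / (l ^ 2 + r ^ 2) ^ 3),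
    integral_comp_norm_sub_eq y (fun r => 9 * l ^ 3 / (l ^ 2 + r ^ 2) ^ 3), hgrad, hspin]
  constructor <;> ring
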